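/- Let 𝔇 := [t₀, t₁] × C where C ⊂ ℝ² is a convex set, and let D : ℝ × ℝ² → ℝ be twice continuously differentiable with ∇D ≠ 0 in a neighborhood of 𝔇. Fix points (t₀, r₀) and (t₁, r₁) in 𝔇 and consider the concatenated path going first along ζ(s) := (s, r₀) for s ∈ [t₀, t₁] and then along ξ(s) := (t₁, (1−s)r₀ + s r₁) for s ∈ [0,1]. If φ is a differentiable angle lift of the gradient along this concatenated path (i.e., ∇D = ‖∇D‖(cos φ, sin φ) along the path), then the total rotation of the gradient satisfies |φ(end) − φ(start)| ≤ (sup_{p ∈ 𝔇} |ω_∇(p)|)·(t₁ − t₀) + (sup_{p ∈ 𝔇} √(κ(p)² + τ_ρ(p)²))·‖r₁ − r₀‖, which in particular is at most (sup_{p ∈ 𝔇} |ω_∇(p)|)·(t₁ − t₀) + (sup_{p ∈ 𝔇} √(κ(p)² + τ_ρ(p)²))·diam(C). -/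

import Mathlib

open Real Set
open scoped RealInnerProductSpace
noncomputable section

/-- The plane ℝ². -/
abbrev Plane := EuclideanSpace ℝ (Fin 2)

/-- Spatial gradient ∇D of the field. -/
def sgrad (D : ℝ × Plane → ℝ) (t : ℝ) (r : Plane) : Plane :=
  gradient (fun p => D (t, p)) r

/-- Partial time derivative D′_t of the field. -/
def dT (D : ℝ × Plane → ℝ) (t : ℝ) (r : Plane) : ℝ :=
  deriv (fun s => D (s, r)) t

/-- Second partial time derivative D″_tt of the field. -/
def dTT (D : ℝ × Plane → ℝ) (t : ℝ) (r : Plane) : ℝ :=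
  deriv (fun s => dT D s r) t

/-- Spatial gradient ∇D′_t of the partial time derivative. -/
def sgradDt (D : ℝ × Plane → ℝ) (t : ℝ) (r : Plane) : Plane :=
  gradient (fun p => dT D t p) r

/-- Spatial Hessian D″ applied to a vector v. -/
def hess (D : ℝ × Plane → ℝ) (t : ℝ) (r : Plane) (v : Plane) : Plane :=
  fderiv ℝ (fun p => sgrad D t p) r v

/-- Clockwise rotation through π/2, i.e. R_{−π/2}. -/
def rotCW (v : Plane) : Plane := !₂[v 1, -(v 0)]

/-- The unit normal N = ∇D/‖∇D‖ of the isoline. -/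
def unitN (D : ℝ × Plane → ℝ) (t : ℝ) (r : Plane) : Plane :=
  ‖sgrad D t r‖⁻¹ • sgrad D t r

/-- The unit tangent T = R_{−π/2} N of the isoline. -/
def unitT (D : ℝ × Plane → ℝ) (t : ℝ) (r : Plane) : Plane :=
  rotCW (unitN D t r)

/-- The density of isolines ρ = ‖∇D‖. -/
def rho (D : ℝ × Plane → ℝ) (t : ℝ) (r : Plane) : ℝ := ‖sgrad D t r‖

/-- The front velocity λ = −D′_t/‖∇D‖ of the isoline. -/
def lam (D : ℝ × Plane → ℝ) (t : ℝ) (r : Plane) : ℝ :=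
  -(dT D t r) / ‖sgrad D t r‖

/-- The proportional growth rate v_ρ = ⟨∇D′_t + λD″N, N⟩/‖∇D‖ of the density ρ
    along the moving isoline. -/
def vRho (D : ℝ × Plane → ℝ) (t : ℝ) (r : Plane) : ℝ :=
  ⟪sgradDt D t r + lam D t r • hess D t r (unitN D t r), unitN D t r⟫ / ‖sgrad D t r‖

/-- The angular velocity ω = −⟨∇D′_t + λD″N, T⟩/‖∇D‖ of rotation of the isoline. -/
def omg (D : ℝ × Plane → ℝ) (t : ℝ) (r : Plane) : ℝ :=
  -⟪sgradDt D t r + lam D t r • hess D t r (unitN D t r), unitT D t r⟫ / ‖sgrad D t r‖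

/-- The front acceleration α of the isoline. -/
def alph (D : ℝ × Plane → ℝ) (t : ℝ) (r : Plane) : ℝ :=
  -(dTT D t r + lam D t r * ⟪sgradDt D t r, unitN D t r⟫) / ‖sgrad D t r‖
    - lam D t r * vRho D t r

/-- The signed curvature κ = −⟨D″T, T⟩/‖∇D‖ of the isoline. -/
def kap (D : ℝ × Plane → ℝ) (t : ℝ) (r : Plane) : ℝ :=
  -⟪hess D t r (unitT D t r), unitT D t r⟫ / ‖sgrad D t r‖

/-- The proportional growth rate τ_ρ = ⟨D″N, T⟩/‖∇D‖ of the density ρ under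
    tangential displacement. -/
def tauRho (D : ℝ × Plane → ℝ) (t : ℝ) (r : Plane) : ℝ :=
  ⟪hess D t r (unitN D t r), unitT D t r⟫ / ‖sgrad D t r‖

/-- The proportional growth rate n_ρ = ⟨D″N, N⟩/‖∇D‖ of the density ρ under
    normal displacement. -/
def nRho (D : ℝ × Plane → ℝ) (t : ℝ) (r : Plane) : ℝ :=
  ⟪hess D t r (unitN D t r), unitN D t r⟫ / ‖sgrad D t r‖

/-- The angular velocity ω_∇ = −⟨∇D′_t, T⟩/‖∇D‖ of rotation of the gradient. -/
def omgGrad (D : ℝ × Plane → ℝ) (t : ℝ) (r : Plane) : ℝ :=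
  -⟪sgradDt D t r, unitT D t r⟫ / ‖sgrad D t r‖

/-- The unit velocity-orientation vector e(θ) = (cos θ, sin θ). -/
def eVec (θ : ℝ) : Plane := !₂[Real.cos θ, Real.sin θ]

/-!
Along a parametrised path, an angle lift `θ` of a nonvanishing plane vector field `g` satisfies
`‖g‖ θ' = -⟪g', T⟫` with `T = R_{−π/2}(g/‖g‖)`.
On the time segment `g' = ∇D′_t`, so `θ' = ω_∇`. On the spatial segment `g' = D″v` with
`v = r₁ - r₀`; expanding `v = ⟪v, N⟫ N + ⟪v, T⟫ T` gives `θ' = κ ⟪v, T⟫ - τ_ρ ⟪v, N⟫`, which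
Cauchy–Schwarz bounds by `√(κ² + τ_ρ²) ‖v‖`. The mean value inequality on each segment and the
triangle inequality at the junction finish the proof.
-/

section PlaneGeometry

lemma inner_plane (x y : Plane) : ⟪x, y⟫ = x 0 * y 0 + x 1 * y 1 := by
  simp [PiLp.inner_apply, Fin.sum_univ_two]
  ring

lemma norm_sq_plane (x : Plane) : ‖x‖ ^ 2 = x 0 ^ 2 + x 1 ^ 2 := by
  rw [← real_inner_self_eq_norm_sq, inner_plane]
  ring

@[simp]
lemma norm_eVec (θ : ℝ) : ‖eVec θ‖ = 1 := by
  have h : ‖eVec θ‖ ^ 2 = 1 ^ 2 := by simp [norm_sq_plane, eVec]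
  exact (pow_left_inj₀ (norm_nonneg _) zero_le_one two_ne_zero).1 h

lemma hasDerivAt_rotCW_eVec (θ : ℝ) : HasDerivAt (fun x => rotCW (eVec x)) (eVec θ) θ := by
  have h : HasDerivAt (fun x => ![Real.sin x, -Real.cos x]) ![Real.cos θ, Real.sin θ] θ := by
    refine hasDerivAt_pi.2 fun i => ?_
    fin_cases i
    · simpa using Real.hasDerivAt_sin θ
    · simpa using (Real.hasDerivAt_cos θ).fun_neg
  exact (PiLp.hasFDerivAt_toLp 2 _).comp_hasDerivAt θ h

lemma inner_rotCW_self (v : Plane) : ⟪v, rotCW v⟫ = 0 := by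
  simp [inner_plane, rotCW]
  ring

lemma eq_inner_smul_add_inner_rotCW_smul {N : Plane} (hN : ‖N‖ = 1) (v : Plane) :
    v = ⟪v, N⟫ • N + ⟪v, rotCW N⟫ • rotCW N := by
  have h : N 0 ^ 2 + N 1 ^ 2 = 1 := by rw [← norm_sq_plane, hN, one_pow]
  ext i
  fin_cases i <;> simp [inner_plane, rotCW]
  · linear_combination (-(v 0)) * h
  · linear_combination (-(v 1)) * h

lemma inner_sq_add_inner_rotCW_sq {N : Plane} (hN : ‖N‖ = 1) (v : Plane) :
    ⟪v, N⟫ ^ 2 + ⟪v, rotCW N⟫ ^ 2 = ‖v‖ ^ 2 := by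
  have h : N 0 ^ 2 + N 1 ^ 2 = 1 := by rw [← norm_sq_plane, hN, one_pow]
  simp only [norm_sq_plane, inner_plane, rotCW, Matrix.cons_val_zero, Matrix.cons_val_one]
  linear_combination (v 0 ^ 2 + v 1 ^ 2) * h

lemma abs_mul_sub_mul_le_sqrt_mul_sqrt (a b c d : ℝ) :
    |a * b - c * d| ≤ √(a ^ 2 + c ^ 2) * √(b ^ 2 + d ^ 2) := by
  rw [← Real.sqrt_mul (by positivity), ← Real.sqrt_sq_eq_abs]
  exact Real.sqrt_le_sqrt (by nlinarith [sq_nonneg (a * d + b * c)])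

end PlaneGeometry

section AngleLift

variable {g : ℝ → Plane} {θ : ℝ → ℝ}

lemma inv_norm_smul_eq_eVec {v : Plane} {φ : ℝ} (hv : v ≠ 0) (hlift : v = ‖v‖ • eVec φ) :
    ‖v‖⁻¹ • v = eVec φ := by
  rwa [inv_smul_eq_iff₀ (norm_ne_zero_iff.2 hv)]

/-- Differentiate the identity `⟪g, R_{−π/2} e(θ)⟫ = 0`. -/
lemma norm_mul_deriv_angle_eq {g' : Plane} {θ' : ℝ} {S : Set ℝ} {s : ℝ}
    (hS : UniqueDiffWithinAt ℝ S s) (hs : s ∈ S)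
    (hg : HasDerivWithinAt g g' S s) (hθ : HasDerivWithinAt θ θ' S s)
    (hlift : ∀ u ∈ S, g u = ‖g u‖ • eVec (θ u)) :
    ‖g s‖ * θ' = -⟪g', rotCW (eVec (θ s))⟫ := by
  have hrot : HasDerivWithinAt (fun u => rotCW (eVec (θ u))) (θ' • eVec (θ s)) S s :=
    (hasDerivAt_rotCW_eVec (θ s)).scomp_hasDerivWithinAt s hθ
  have hzero : HasDerivWithinAt (fun u => ⟪g u, rotCW (eVec (θ u))⟫) 0 S s := by
    refine (hasDerivWithinAt_const s S 0).congr (fun u hu => ?_) ?_ <;>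
      rw [hlift _ ‹_›, real_inner_smul_left, inner_rotCW_self, mul_zero]
  have h := hS.eq_deriv S (hg.inner ℝ hrot) hzero
  rw [real_inner_smul_right, hlift s hs, real_inner_smul_left, real_inner_self_eq_norm_sq,
    norm_eVec] at h
  linarith

lemma abs_sub_le_of_angle_lift {a b M : ℝ} {g' : ℝ → Plane} {θ' : ℝ → ℝ} (hab : a ≤ b)
    (hg : ∀ s ∈ Icc a b, HasDerivWithinAt g (g' s) (Icc a b) s)
    (hθ : ∀ s ∈ Icc a b, HasDerivWithinAt θ (θ' s) (Icc a b) s)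
    (hlift : ∀ s ∈ Icc a b, g s = ‖g s‖ • eVec (θ s))
    (hne : ∀ s ∈ Ico a b, g s ≠ 0)
    (hbound : ∀ s ∈ Ico a b, |⟪g' s, rotCW (‖g s‖⁻¹ • g s)⟫| ≤ M * ‖g s‖) :
    |θ b - θ a| ≤ M * (b - a) := by
  refine norm_image_sub_le_of_norm_deriv_le_segment' hθ (fun s hs => ?_) b ⟨hab, le_rfl⟩
  have hsI : s ∈ Icc a b := Ico_subset_Icc_self hs
  have hrate := norm_mul_deriv_angle_eq (uniqueDiffOn_Icc (hs.1.trans_lt hs.2) s hsI) hsI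
    (hg s hsI) (hθ s hsI) hlift
  rw [← inv_norm_smul_eq_eVec (hne s hs) (hlift s hsI)] at hrate
  have hpos : 0 < ‖g s‖ := norm_pos_iff.2 (hne s hs)
  rw [Real.norm_eq_abs, ← mul_le_mul_iff_of_pos_right hpos, ← abs_norm, ← abs_mul, abs_norm,
    mul_comm, hrate, abs_neg]
  exact hbound s hs

end AngleLift

section ContDiffAt

open Topology

variable {𝕜 E F : Type*} [NontriviallyNormedField 𝕜] [NormedAddCommGroup E] [NormedSpace 𝕜 E]
  [NormedAddCommGroup F] [NormedSpace 𝕜 F] {f : E → F} {x : E} {n : WithTop ℕ∞}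

lemma ContDiffAt.eventually_differentiableAt (hf : ContDiffAt 𝕜 n f x) (hn : 1 ≤ n) :
    ∀ᶠ y in 𝓝 x, DifferentiableAt 𝕜 f y :=
  ((hf.of_le hn).eventually (by simp)).mono fun _ hy => hy.differentiableAt one_ne_zero

lemma ContDiffAt.differentiableAt_fderiv (hf : ContDiffAt 𝕜 n f x) (hn : 2 ≤ n) :
    DifferentiableAt 𝕜 (fderiv 𝕜 f) x :=
  (hf.fderiv_right (m := 1) (by simpa [one_add_one_eq_two] using hn)).differentiableAt one_ne_zero

end ContDiffAt

section PartialDerivatives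

def spatialGradient : ((ℝ × Plane) →L[ℝ] ℝ) →L[ℝ] Plane :=
  (InnerProductSpace.toDual ℝ Plane).symm.toContinuousLinearEquiv.toContinuousLinearMap ∘L
    (ContinuousLinearMap.compL ℝ Plane (ℝ × Plane) ℝ).flip (ContinuousLinearMap.inr ℝ ℝ Plane)

lemma inner_spatialGradient (Φ : (ℝ × Plane) →L[ℝ] ℝ) (u : Plane) :
    ⟪spatialGradient Φ, u⟫ = Φ (0, u) :=
  InnerProductSpace.toDual_symm_apply

variable {D : ℝ × Plane → ℝ} {t : ℝ} {r : Plane}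

lemma sgrad_eq_spatialGradient (hd : DifferentiableAt ℝ D (t, r)) :
    sgrad D t r = spatialGradient (fderiv ℝ D (t, r)) := by
  have hslice : HasFDerivAt (fun p => D (t, p))
      (fderiv ℝ D (t, r) ∘L ContinuousLinearMap.inr ℝ ℝ Plane) r :=
    hd.hasFDerivAt.comp r (hasFDerivAt_prodMk_right t r)
  refine ext_inner_right ℝ fun u => ?_
  rw [inner_spatialGradient, sgrad, gradient, InnerProductSpace.toDual_symm_apply, hslice.fderiv]
  rfl

lemma dT_eq_fderiv (hd : DifferentiableAt ℝ D (t, r)) : dT D t r = fderiv ℝ D (t, r) (1, 0) :=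
  (hd.hasFDerivAt.comp_hasDerivAt t ((hasDerivAt_id t).prodMk (hasDerivAt_const t r))).deriv

/-- Equality of the mixed partial derivatives `∂ₜ∇D = ∇∂ₜD`. -/
lemma sgradDt_eq_spatialGradient (hD : ContDiffAt ℝ 2 D (t, r)) :
    sgradDt D t r = spatialGradient (fderiv ℝ (fderiv ℝ D) (t, r) (1, 0)) := by
  have hslice : HasFDerivAt (fun p => fderiv ℝ D (t, p) (1, 0))
      (ContinuousLinearMap.apply ℝ ℝ ((1, 0) : ℝ × Plane) ∘L
        fderiv ℝ (fderiv ℝ D) (t, r) ∘L ContinuousLinearMap.inr ℝ ℝ Plane) r :=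
    (ContinuousLinearMap.apply ℝ ℝ ((1, 0) : ℝ × Plane)).hasFDerivAt.comp r
      ((hD.differentiableAt_fderiv le_rfl).hasFDerivAt.comp r (hasFDerivAt_prodMk_right t r))
  have hdT : HasFDerivAt (dT D t)
      (ContinuousLinearMap.apply ℝ ℝ ((1, 0) : ℝ × Plane) ∘L
        fderiv ℝ (fderiv ℝ D) (t, r) ∘L ContinuousLinearMap.inr ℝ ℝ Plane) r := by
    refine hslice.congr_of_eventuallyEq ?_
    have hcont : Continuous fun p : Plane => ((t, p) : ℝ × Plane) := by fun_prop
    exact (hcont.tendsto r).eventually (hD.eventually_differentiableAt one_le_two) |>.mono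
      fun _ hp => dT_eq_fderiv hp
  refine ext_inner_right ℝ fun u => ?_
  rw [inner_spatialGradient, sgradDt, gradient, InnerProductSpace.toDual_symm_apply, hdT.fderiv]
  exact hD.isSymmSndFDerivAt (by simp) (0, u) (1, 0)

lemma hasDerivAt_sgrad_time (hD : ContDiffAt ℝ 2 D (t, r)) :
    HasDerivAt (fun u => sgrad D u r) (sgradDt D t r) t := by
  have hline : HasDerivAt (fun u : ℝ => ((u, r) : ℝ × Plane)) (1, 0) t :=
    (hasDerivAt_id t).prodMk (hasDerivAt_const t r)
  rw [sgradDt_eq_spatialGradient hD]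
  refine (spatialGradient.hasFDerivAt.comp_hasDerivAt t
    ((hD.differentiableAt_fderiv le_rfl).hasFDerivAt.comp_hasDerivAt t hline)).congr_of_eventuallyEq ?_
  exact (hline.continuousAt.tendsto.eventually (hD.eventually_differentiableAt one_le_two)).mono
    fun _ hu => sgrad_eq_spatialGradient hu

lemma differentiableAt_sgrad_space (hD : ContDiffAt ℝ 2 D (t, r)) :
    DifferentiableAt ℝ (fun p => sgrad D t p) r := by
  have hcont : Continuous fun p : Plane => ((t, p) : ℝ × Plane) := by fun_prop
  refine (spatialGradient.differentiableAt.comp r ((hD.differentiableAt_fderiv le_rfl).comp r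
    (differentiableAt_const t |>.prodMk differentiableAt_id))).congr_of_eventuallyEq ?_
  exact ((hcont.tendsto r).eventually (hD.eventually_differentiableAt one_le_two)).mono
    fun _ hp => sgrad_eq_spatialGradient hp

lemma hasDerivAt_sgrad_segment {r₀ v : Plane} {s : ℝ} (hD : ContDiffAt ℝ 2 D (t, r₀ + s • v)) :
    HasDerivAt (fun u => sgrad D t (r₀ + u • v)) (hess D t (r₀ + s • v) v) s := by
  have hline : HasDerivAt (fun u : ℝ => r₀ + u • v) v s := by
    simpa using ((hasDerivAt_id s).smul_const v).const_add r₀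
  exact (differentiableAt_sgrad_space hD).hasFDerivAt.comp_hasDerivAt s hline

end PartialDerivatives

section IsolineBounds

variable {D : ℝ × Plane → ℝ} {t : ℝ} {r : Plane}

lemma norm_unitN (h0 : sgrad D t r ≠ 0) : ‖unitN D t r‖ = 1 := by
  rw [unitN, norm_smul, norm_inv, norm_norm, inv_mul_cancel₀ (norm_ne_zero_iff.2 h0)]

lemma abs_inner_sgradDt_unitT (h0 : sgrad D t r ≠ 0) :
    |⟪sgradDt D t r, unitT D t r⟫| = |omgGrad D t r| * ‖sgrad D t r‖ := by
  rw [omgGrad, abs_div, abs_neg, abs_norm, div_mul_cancel₀ _ (norm_ne_zero_iff.2 h0)]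

lemma abs_inner_hess_unitT_le (h0 : sgrad D t r ≠ 0) (v : Plane) :
    |⟪hess D t r v, unitT D t r⟫|
      ≤ √(kap D t r ^ 2 + tauRho D t r ^ 2) * ‖v‖ * ‖sgrad D t r‖ := by
  have hρ : ‖sgrad D t r‖ ≠ 0 := norm_ne_zero_iff.2 h0
  have hN := norm_unitN h0
  have hκ : ⟪hess D t r (unitT D t r), unitT D t r⟫ = -(kap D t r * ‖sgrad D t r‖) := by
    rw [kap]; field_simp
  have hτ : ⟪hess D t r (unitN D t r), unitT D t r⟫ = tauRho D t r * ‖sgrad D t r‖ := by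
    rw [tauRho]; field_simp
  have hcomp : ⟪hess D t r v, unitT D t r⟫ = -(‖sgrad D t r‖ *
      (kap D t r * ⟪v, unitT D t r⟫ - tauRho D t r * ⟪v, unitN D t r⟫)) := by
    conv_lhs => rw [eq_inner_smul_add_inner_rotCW_smul hN v]
    simp only [hess, map_add, map_smul, inner_add_left, real_inner_smul_left] at hκ hτ ⊢
    rw [← unitT, hκ, hτ]
    ring
  have hpar : √(⟪v, unitT D t r⟫ ^ 2 + ⟪v, unitN D t r⟫ ^ 2) = ‖v‖ := by
    rw [add_comm, unitT, inner_sq_add_inner_rotCW_sq hN, Real.sqrt_sq (norm_nonneg v)]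
  rw [hcomp, abs_neg, abs_mul, abs_norm, mul_comm, ← hpar]
  gcongr
  exact abs_mul_sub_mul_le_sqrt_mul_sqrt _ _ _ _

end IsolineBounds

lemma ENNReal.ofReal_add_mul_norm_sub_le_ediam {E : Type*} [SeminormedAddCommGroup E]
    {C : Set E} {x y : E} (hx : x ∈ C) (hy : y ∈ C) (a b : ℝ) :
    ENNReal.ofReal (a + b * ‖y - x‖) ≤ ENNReal.ofReal a + ENNReal.ofReal b * Metric.ediam C := by
  refine ENNReal.ofReal_add_le.trans ?_
  gcongr
  rw [ENNReal.ofReal_mul' (norm_nonneg _), ← dist_eq_norm, ← edist_dist]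
  exact mul_le_mul_right (Metric.edist_le_ediam_of_mem hy hx) _

/-- bound on the total rotation of the gradient between two points of
`𝔇 = [t₀,t₁] × C` (`C` convex) along the concatenated path consisting of the time
segment `ζ(s) = (s, r₀)`, `s ∈ [t₀,t₁]`, followed by the spatial segment
`ξ(s) = (t₁, (1−s)r₀ + s·r₁)`, `s ∈ [0,1]`: for differentiable angle lifts `φ` (along
`ζ`) and `ψ` (along `ξ`) matching at the junction, the total rotation is at most
`(sup_𝔇 |ω_∇|)·(t₁ − t₀) + (sup_𝔇 √(κ² + τ_ρ²))·‖r₁ − r₀‖`, and in particular at most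
`(sup_𝔇 |ω_∇|)·(t₁ − t₀) + (sup_𝔇 √(κ² + τ_ρ²))·diam C`. -/
theorem gradient_total_rotation_bound
    (D : ℝ × Plane → ℝ) (t₀ t₁ : ℝ) (ht : t₀ ≤ t₁) (C : Set Plane)
    (hC : Convex ℝ C) (r₀ r₁ : Plane) (hr₀ : r₀ ∈ C) (hr₁ : r₁ ∈ C)
    (U : Set (ℝ × Plane)) (hU : IsOpen U) (hDU : Icc t₀ t₁ ×ˢ C ⊆ U)
    (hD : ContDiffOn ℝ 2 D U) (hgrad : ∀ p ∈ U, sgrad D p.1 p.2 ≠ 0)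
    (φ φ' ψ ψ' : ℝ → ℝ)
    (hφ : ∀ s ∈ Icc t₀ t₁, HasDerivAt φ (φ' s) s)
    (hliftφ : ∀ s ∈ Icc t₀ t₁, sgrad D s r₀ = ‖sgrad D s r₀‖ • eVec (φ s))
    (hψ : ∀ s ∈ Icc (0:ℝ) 1, HasDerivAt ψ (ψ' s) s)
    (hliftψ : ∀ s ∈ Icc (0:ℝ) 1,
      sgrad D t₁ (r₀ + s • (r₁ - r₀))
        = ‖sgrad D t₁ (r₀ + s • (r₁ - r₀))‖ • eVec (ψ s))
    (hjunction : ψ 0 = φ t₁)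
    (A B : ℝ)
    (hA : ∀ p ∈ Icc t₀ t₁ ×ˢ C, |omgGrad D p.1 p.2| ≤ A)
    (hB : ∀ p ∈ Icc t₀ t₁ ×ˢ C,
      Real.sqrt ((kap D p.1 p.2) ^ 2 + (tauRho D p.1 p.2) ^ 2) ≤ B) :
    |ψ 1 - φ t₀| ≤ A * (t₁ - t₀) + B * ‖r₁ - r₀‖ ∧
    ENNReal.ofReal |ψ 1 - φ t₀|
      ≤ ENNReal.ofReal (A * (t₁ - t₀)) + ENNReal.ofReal B * EMetric.diam C := by
  have hsmooth : ∀ p ∈ Icc t₀ t₁ ×ˢ C, ContDiffAt ℝ 2 D p :=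
    fun p hp => hD.contDiffAt (hU.mem_nhds (hDU hp))
  have hne : ∀ p ∈ Icc t₀ t₁ ×ˢ C, sgrad D p.1 p.2 ≠ 0 := fun p hp => hgrad p (hDU hp)
  have htime_mem : ∀ s ∈ Icc t₀ t₁, (s, r₀) ∈ Icc t₀ t₁ ×ˢ C := fun s hs => ⟨hs, hr₀⟩
  have hspace_mem : ∀ s ∈ Icc (0 : ℝ) 1, (t₁, r₀ + s • (r₁ - r₀)) ∈ Icc t₀ t₁ ×ˢ C :=
    fun s hs => ⟨right_mem_Icc.2 ht, hC.add_smul_sub_mem hr₀ hr₁ hs⟩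
  have htime : |φ t₁ - φ t₀| ≤ A * (t₁ - t₀) := by
    refine abs_sub_le_of_angle_lift ht
      (fun s hs => (hasDerivAt_sgrad_time (hsmooth _ (htime_mem s hs))).hasDerivWithinAt)
      (fun s hs => (hφ s hs).hasDerivWithinAt) hliftφ
      (fun s hs => hne _ (htime_mem s (Ico_subset_Icc_self hs))) fun s hs => ?_
    have hp := htime_mem s (Ico_subset_Icc_self hs)
    exact (abs_inner_sgradDt_unitT (hne _ hp)).trans_le
      (mul_le_mul_of_nonneg_right (hA _ hp) (norm_nonneg _))
  have hspace : |ψ 1 - ψ 0| ≤ B * ‖r₁ - r₀‖ * (1 - 0) := by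
    refine abs_sub_le_of_angle_lift zero_le_one
      (fun s hs => (hasDerivAt_sgrad_segment (hsmooth _ (hspace_mem s hs))).hasDerivWithinAt)
      (fun s hs => (hψ s hs).hasDerivWithinAt) hliftψ
      (fun s hs => hne _ (hspace_mem s (Ico_subset_Icc_self hs))) fun s hs => ?_
    have hp := hspace_mem s (Ico_subset_Icc_self hs)
    exact (abs_inner_hess_unitT_le (hne _ hp) _).trans (by gcongr; exact hB _ hp)
  have hbound : |ψ 1 - φ t₀| ≤ A * (t₁ - t₀) + B * ‖r₁ - r₀‖ := by
    calc |ψ 1 - φ t₀| ≤ |ψ 1 - ψ 0| + |φ t₁ - φ t₀| := hjunction ▸ abs_sub_le _ _ _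
      _ ≤ A * (t₁ - t₀) + B * ‖r₁ - r₀‖ := by linarith
  exact ⟨hbound, (ENNReal.ofReal_le_ofReal hbound).trans
    (ENNReal.ofReal_add_mul_norm_sub_le_ediam hr₀ hr₁ _ _)⟩
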